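/- arXiv:2511.05332 — 8 statements merged into one kernel-verified Lean document; each statement's English description precedes it below -/
import Mathlib

section
/- For any natural number n ≥ 1 and real x, the sum over all permutations σ of {1,...,n} of sign(σ)·x^(fix(σ)) equals (x - 1 + n)(x - 1)^(n-1), where fix(σ) is the number of fixed points of σ. -/
/-!
By the Leibniz formula the sum is the determinant of the matrix with `x` on the diagonal and `1`
elsewhere, i.e. of `(x - 1) • 1 + J` with `J` the all-ones matrix. As `J` has rank one,
`det (t • 1 + J) = t ^ n + n t ^ (n - 1)`: this is the characteristic polynomial of `-J` at `t`.
-/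

open Matrix Polynomial

theorem Matrix.det_scalar_add_vecMulVec {ι R : Type*} [Fintype ι] [DecidableEq ι] [CommRing R]
    (t : R) (u v : ι → R) :
    (scalar ι t + vecMulVec u v).det
      = t ^ Fintype.card ι + (u ⬝ᵥ v) * t ^ (Fintype.card ι - 1) := by
  have h := eval_charpoly (vecMulVec (-u) v) t
  rw [charpoly_vecMulVec, neg_vecMulVec, sub_neg_eq_add] at h
  rw [← h]
  simp [smul_eq_C_mul]

theorem sum_sign_mul_pow_card_fixed_eq_det {ι R : Type*} [Fintype ι] [DecidableEq ι] [CommRing R]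
    (x : R) :
    ∑ σ : Equiv.Perm ι, ((Equiv.Perm.sign σ : ℤ) : R) * x ^ (Finset.univ.filter fun i => σ i = i).card
      = (Matrix.of fun i j : ι => if i = j then x else 1).det := by
  rw [det_apply']
  refine Finset.sum_congr rfl fun σ _ => ?_
  rw [← Finset.prod_const x, Finset.prod_filter]
  congr 1

theorem signed_fix_gen (n : ℕ) (hn : 1 ≤ n) (x : ℝ) :
    (∑ σ : Equiv.Perm (Fin n),
      ((Equiv.Perm.sign σ : ℤ) : ℝ) * x ^ (Finset.univ.filter fun i => σ i = i).card)
      = (x - 1 + n) * (x - 1) ^ (n - 1) := by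
  have hmat : (Matrix.of fun i j : Fin n => if i = j then x else 1)
      = scalar (Fin n) (x - 1) + vecMulVec 1 1 := by
    ext i j
    by_cases h : i = j <;> simp [h]
  obtain ⟨m, rfl⟩ : ∃ m, n = m + 1 := ⟨n - 1, by omega⟩
  rw [sum_sign_mul_pow_card_fixed_eq_det, hmat, det_scalar_add_vecMulVec, Fintype.card_fin]
  simp only [dotProduct_one, Pi.one_apply, Finset.sum_const, Finset.card_univ, Fintype.card_fin,
    nsmul_eq_mul, mul_one, add_tsub_cancel_right, Nat.cast_add, Nat.cast_one]
  ring
end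

section
/- For natural numbers n and k with 0 ≤ k ≤ n-1 and any real x, the sum over σ in the symmetric group S_n of sign(σ)·fix(σ)·(fix(σ)-1)···(fix(σ)-k+1)·x^(fix(σ)-k) equals (x-1)^(n-k-1) · n! · (x + n - k - 1)/(n-k)!, where terms with fix(σ) < k vanish since the falling factorial is zero. -/
/-! The signed fixed-point count `∑ σ, sign σ * x ^ fix σ` is the Leibniz expansion of the
determinant of the matrix with `x` on the diagonal and `1` elsewhere, i.e. of `(x - 1) • 1 + J`
with `J` the all-ones matrix. For `x ≠ 1` the matrix determinant lemma gives
`(x - 1) ^ n + n * (x - 1) ^ (n - 1)`, and since both sides are polynomials in `x` this holds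
identically. The sum in the theorem is the `k`-th derivative of this
polynomial in `x`, and differentiating the closed form gives the right-hand side. -/

open Finset Polynomial Matrix Nat

namespace Equiv.Perm

variable {α : Type*} [Fintype α] [DecidableEq α]

def numFixedPoints (σ : Perm α) : ℕ := #{i | σ i = i}

theorem prod_ite_eq_pow_numFixedPoints {M : Type*} [CommMonoid M] (σ : Perm α) (x : M) :
    ∏ i, (if σ i = i then x else 1) = x ^ σ.numFixedPoints := by
  rw [prod_ite, prod_const, prod_const_one, mul_one, numFixedPoints]

end Equiv.Perm

open Equiv Perm

noncomputable def signFixedPointPoly (R α : Type*) [CommRing R] [Fintype α] [DecidableEq α] :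
    R[X] :=
  ∑ σ : Perm α, ((sign σ : ℤ) : R[X]) * X ^ σ.numFixedPoints

variable {α : Type*} [Fintype α] [DecidableEq α]

theorem det_of_ite_eq_of_ne_one {K : Type*} [Field K] {x : K} (hx : x ≠ 1) :
    (of fun i j : α => if i = j then x else 1).det
      = (x - 1) ^ Fintype.card α + Fintype.card α * (x - 1) ^ (Fintype.card α - 1) := by
  have hx1 : x - 1 ≠ 0 := sub_ne_zero.mpr hx
  have hsplit : (of fun i j : α => if i = j then x else 1) = (x - 1) •
      (1 + replicateCol Unit (fun _ => (x - 1)⁻¹) * replicateRow Unit (fun _ => (1 : K))) := by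
    ext i j
    by_cases h : i = j <;> simp [h, ← vecMulVec_eq, vecMulVec_apply, mul_add, hx1]
  rw [hsplit, det_smul, det_one_add_replicateCol_mul_replicateRow]
  simp only [dotProduct, sum_const, Finset.card_univ, nsmul_eq_mul]
  rcases Nat.eq_zero_or_pos (Fintype.card α) with h0 | h0
  · simp [h0]
  · rw [← Nat.sub_add_cancel h0, pow_succ]
    field_simp
    push_cast
    ring

theorem eval_signFixedPointPoly {R : Type*} [CommRing R] (x : R) :
    (signFixedPointPoly R α).eval x = (of fun i j : α => if i = j then x else 1).det := by
  simp [signFixedPointPoly, det_apply, eval_finsetSum, prod_ite_eq_pow_numFixedPoints,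
    Units.smul_def]

theorem signFixedPointPoly_eq (K : Type*) [Field K] [Infinite K] :
    signFixedPointPoly K α
      = (X - 1) ^ Fintype.card α + (Fintype.card α : K[X]) * (X - 1) ^ (Fintype.card α - 1) := by
  refine eq_of_infinite_eval_eq _ _ ((Set.finite_singleton (1 : K)).infinite_compl.mono ?_)
  intro x hx
  simp [eval_signFixedPointPoly, det_of_ite_eq_of_ne_one hx]

theorem iterate_derivative_signFixedPointPoly (R : Type*) [CommRing R] (k : ℕ) :
    derivative^[k] (signFixedPointPoly R α) = ∑ σ : Perm α,
      ((sign σ : ℤ) : R[X]) * (σ.numFixedPoints.descFactorial k : R[X]) *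
        X ^ (σ.numFixedPoints - k) := by
  simp [signFixedPointPoly, iterate_derivative_sum, iterate_derivative_intCast_mul,
    iterate_derivative_X_pow_eq_natCast_mul, mul_assoc]

theorem descFactorial_mul_pow_add_eq {K : Type*} [Field K] [CharZero K] {n k : ℕ} (hk : k < n)
    (y : K) :
    (n.descFactorial k : K) * y ^ (n - k) + n * ((n - 1).descFactorial k * y ^ (n - 1 - k))
      = y ^ (n - k - 1) * n ! * (y + (n - k : ℕ)) / (n - k)! := by
  obtain ⟨m, rfl⟩ : ∃ m, n = m + k + 1 := ⟨n - k - 1, by omega⟩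
  have hfac := Nat.factorial_mul_descFactorial (show k ≤ m + k + 1 by omega)
  have hsucc := Nat.succ_descFactorial (m + k) k
  simp only [show m + k + 1 - k = m + 1 by omega, show m + k + 1 - 1 = m + k by omega,
    show m + 1 - 1 = m by omega, show m + k - k = m by omega] at hfac hsucc ⊢
  rw [eq_div_iff (Nat.cast_ne_zero.mpr (factorial_ne_zero _)), ← hfac]
  have hsucc' : ((m + 1 : ℕ) : K) * (m + k + 1).descFactorial k
      = (m + k + 1 : ℕ) * (m + k).descFactorial k := by exact_mod_cast hsucc
  push_cast at hsucc' ⊢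
  linear_combination -y ^ m * (m + 1)! * hsucc'

theorem deriv_identity (n k : ℕ) (hn : 1 ≤ n) (hk : k ≤ n - 1) (x : ℝ) :
    (∑ σ : Equiv.Perm (Fin n),
      ((Equiv.Perm.sign σ : ℤ) : ℝ) *
        (Nat.descFactorial (Finset.univ.filter fun i => σ i = i).card k : ℝ) *
        x ^ ((Finset.univ.filter fun i => σ i = i).card - k))
      = (x - 1) ^ (n - k - 1) * (n.factorial : ℝ) * (x + n - k - 1) / ((n - k).factorial : ℝ) := by
  have h := congrArg (fun p => (derivative^[k] p).eval x) (signFixedPointPoly_eq ℝ (α := Fin n))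
  rw [← C_1, iterate_map_add, iterate_derivative_natCast_mul, iterate_derivative_X_sub_pow,
    iterate_derivative_X_sub_pow, Fintype.card_fin, iterate_derivative_signFixedPointPoly] at h
  simp only [eval_finsetSum, eval_mul, eval_intCast, eval_natCast, eval_pow, eval_X, map_one,
    nsmul_eq_mul, eval_add, eval_sub, eval_one] at h
  refine h.trans ?_
  rw [descFactorial_mul_pow_add_eq (by omega), Nat.cast_sub (by omega)]
  ring
end

section
/- For any natural number n ≥ 1, the sum over σ in S_n of sign(σ) times the falling factorial fix(σ)·(fix(σ)-1)···(fix(σ)-n+2) (i.e., the product of fix(σ)-j for j = 0 to n-2) equals n!. -/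
theorem top_deriv_identity (n : ℕ) (hn : 1 ≤ n) :
    (∑ σ : Equiv.Perm (Fin n),
      (Equiv.Perm.sign σ : ℤ) *
        (Nat.descFactorial (Finset.univ.filter fun i => σ i = i).card (n - 1) : ℤ))
      = (n.factorial : ℤ) := by
  rw [Finset.sum_eq_single 1]
  · have hcard : (Finset.univ.filter fun i => (1 : Equiv.Perm (Fin n)) i = i).card = n := by
      simp
    rw [hcard]
    have h : n.descFactorial (n - 1) = n.factorial := by
      have := Nat.descFactorial_succ n (n - 1)
      have hn' : n - 1 + 1 = n := Nat.succ_pred_eq_of_pos hn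
      rw [hn'] at this
      rw [Nat.descFactorial_self, Nat.sub_sub_self hn, one_mul] at this
      exact this.symm
    simp [h]
  · intro σ _ hσ
    obtain ⟨i, hi⟩ : ∃ i, σ i ≠ i := by
      by_contra h
      push_neg at h
      exact hσ (Equiv.ext h)
    have hsi : σ (σ i) ≠ σ i := fun h => hi (σ.injective h)
    have hsub : (Finset.univ.filter fun j => σ j = j) ⊆ Finset.univ \ {i, σ i} := by
      intro j hj
      simp only [Finset.mem_filter] at hj
      simp only [Finset.mem_sdiff, Finset.mem_univ, Finset.mem_insert, Finset.mem_singleton,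
        true_and]
      push_neg
      constructor
      · rintro rfl; exact hi hj.2
      · rintro rfl; exact hsi hj.2
    have hc2 : (Finset.univ \ {i, σ i} : Finset (Fin n)).card = n - 2 := by
      rw [Finset.card_sdiff_of_subset (Finset.subset_univ _)]
      rw [Finset.card_univ, Fintype.card_fin]
      congr 1
      rw [Finset.card_insert_of_notMem (by simp [Ne.symm hi]), Finset.card_singleton]
    have hn2 : 2 ≤ n := by
      have := (Fin.pos_iff_nonempty.mpr ⟨i⟩)
      by_contra h
      push_neg at h
      interval_cases n
      · exact absurd (Subsingleton.elim (σ i) i) hi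
    have hlt : (Finset.univ.filter fun j => σ j = j).card < n - 1 := by
      have := Finset.card_le_card hsub
      omega
    rw [Nat.descFactorial_eq_zero_iff_lt.mpr hlt]
    simp
  · simp
end

section
/- For natural numbers n and k with 0 ≤ k ≤ n-1, the sum over σ in S_n of sign(σ)·(fix(σ))_k·2^(fix(σ)-k) equals n!·(n-k+1)/(n-k)!, where (fix(σ))_k denotes the falling factorial fix(σ)(fix(σ)-1)···(fix(σ)-k+1). -/
/-!
The sum is the value at `2` of the `k`-th derivative of `P = ∑ σ, sign σ • X ^ fix σ`.
Writing `X = y + 1` and `(y + 1) ^ fix σ = ∑_{A ⊆ Fix σ} y ^ |A|`, the coefficient of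
`y ^ |A|` is the sum of `sign σ` over the permutations fixing `A` pointwise, i.e. the sum of
signs over `Perm Aᶜ`, which vanishes unless `|Aᶜ| ≤ 1`. Hence
`P = (X - 1) ^ n + n (X - 1) ^ (n - 1)`, whose `k`-th derivative at `2` is
`n.descFactorial k + n (n - 1).descFactorial k = n! (n - k + 1) / (n - k)!`.
-/

open Finset Equiv Polynomial
open scoped Nat

theorem Finset.sum_range_choose_smul_eq_of_le_one {M : Type*} [AddCommMonoid M] (n : ℕ)
    (g : ℕ → M) (hg : ∀ j, 1 < j → g j = 0) :
    ∑ j ∈ range (n + 1), n.choose j • g j = g 0 + n • g 1 := by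
  cases n with
  | zero => simp
  | succ m =>
    rw [sum_range_succ', sum_range_succ',
      sum_eq_zero fun j _ => by rw [hg (j + 1 + 1) (by omega), smul_zero]]
    simp [add_comm]

namespace Equiv.Perm

variable {α : Type*} [Fintype α] [DecidableEq α]

theorem sum_sign_eq_ite :
    ∑ σ : Perm α, (sign σ : ℤ) = if Fintype.card α ≤ 1 then 1 else 0 := by
  split_ifs with h
  · have : Subsingleton α := Fintype.card_le_one_iff_subsingleton.mp h
    simp
  · have : Nontrivial α := Fintype.one_lt_card_iff_nontrivial.mp (by omega)
    obtain ⟨a, b, hab⟩ := exists_pair_ne α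
    refine sum_hom_units_eq_zero ((Units.coeHom ℤ).comp sign) fun h1 => ?_
    have := DFunLike.congr_fun h1 (swap a b)
    simp [sign_swap hab] at this

theorem sum_sign_filter_fixing_eq_ite (s : Finset α) :
    ∑ σ : Perm α with ∀ a ∈ s, σ a = a, (sign σ : ℤ) =
      if #sᶜ ≤ 1 then 1 else 0 := by
  have hcard : Fintype.card {a // a ∉ s} = #sᶜ := by
    simp [Fintype.card_subtype_compl, card_compl]
  calc ∑ σ : Perm α with ∀ a ∈ s, σ a = a, (sign σ : ℤ)
      = ∑ σ : {σ : Perm α // ∀ a, ¬a ∉ s → σ a = a}, (sign σ.1 : ℤ) :=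
        Finset.sum_subtype _ (by simp) _
    _ = ∑ τ : Perm {a // a ∉ s}, (sign τ : ℤ) :=
        (Fintype.sum_equiv (Perm.subtypeEquivSubtypePerm _) _ _ fun τ => by
          simp [sign_ofSubtype]).symm
    _ = if #sᶜ ≤ 1 then 1 else 0 := by rw [sum_sign_eq_ite, hcard]

theorem sum_sign_mul_add_one_pow_card_fixed {R : Type*} [CommRing R] (y : R) :
    ∑ σ : Perm α, ((sign σ : ℤ) : R) * (y + 1) ^ #{a | σ a = a}
      = y ^ Fintype.card α + Fintype.card α * y ^ (Fintype.card α - 1) := by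
  set n := Fintype.card α
  have expand (F : Finset α) : (y + 1) ^ #F = ∑ A ∈ F.powerset, y ^ #A := by
    simpa using (sum_pow_mul_eq_add_pow y 1 F).symm
  calc ∑ σ : Perm α, ((sign σ : ℤ) : R) * (y + 1) ^ #{a | σ a = a}
      = ∑ σ : Perm α, ∑ A : Finset α,
          if ∀ a ∈ A, σ a = a then ((sign σ : ℤ) : R) * y ^ #A else 0 := by
        refine sum_congr rfl fun σ _ => ?_
        rw [expand, mul_sum, ← sum_filter]
        congr 1
        ext A
        simp [subset_iff]
    _ = ∑ A : Finset α,
          ((∑ σ : Perm α with ∀ a ∈ A, σ a = a, (sign σ : ℤ) : ℤ) : R) * y ^ #A := by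
        rw [sum_comm]
        refine sum_congr rfl fun A _ => ?_
        rw [sum_filter, Int.cast_sum, sum_mul]
        refine sum_congr rfl fun σ _ => ?_
        split_ifs <;> simp
    _ = ∑ A : Finset α, if #Aᶜ ≤ 1 then y ^ (n - #Aᶜ) else 0 := by
        refine sum_congr rfl fun A _ => ?_
        rw [sum_sign_filter_fixing_eq_ite, card_compl, Nat.sub_sub_self (card_le_univ A)]
        split_ifs <;> simp
    _ = ∑ B : Finset α, if #B ≤ 1 then y ^ (n - #B) else 0 :=
        Fintype.sum_bijective _ compl_bijective _ _ fun _ => rfl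
    _ = ∑ j ∈ range (n + 1), n.choose j • if j ≤ 1 then y ^ (n - j) else 0 := by
        rw [← powerset_univ, sum_powerset_apply_card fun j => if j ≤ 1 then y ^ (n - j) else 0,
          card_univ]
    _ = y ^ n + n * y ^ (n - 1) := by
        rw [Finset.sum_range_choose_smul_eq_of_le_one _ _ fun j hj => if_neg (by omega)]
        simp

end Equiv.Perm

namespace Polynomial

variable {R : Type*} [CommRing R]

theorem eval_iterate_derivative_sum_C_mul_X_pow {ι : Type*} (s : Finset ι) (c : ι → R)
    (m : ι → ℕ) (k : ℕ) (x : R) :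
    eval x (derivative^[k] (∑ i ∈ s, C (c i) * X ^ m i))
      = ∑ i ∈ s, c i * (m i).descFactorial k * x ^ (m i - k) := by
  simp [iterate_derivative_sum, iterate_derivative_C_mul, iterate_derivative_X_pow_eq_C_mul,
    eval_finsetSum, mul_assoc]

theorem eval_two_iterate_derivative_X_sub_one_pow (n k : ℕ) :
    eval 2 (derivative^[k] ((X - 1) ^ n : R[X])) = n.descFactorial k := by
  rw [sub_eq_add_neg, ← C_1, ← C_neg, iterate_derivative_X_add_pow]
  norm_num

end Polynomial

theorem Nat.descFactorial_add_mul_descFactorial_sub_one {n k : ℕ} (hk : k ≤ n) :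
    (n.descFactorial k + n * (n - 1).descFactorial k : ℝ)
      = n ! * (n - k + 1) / (n - k)! := by
  have hsucc : n * (n - 1).descFactorial k = (n - k) * n.descFactorial k := by
    rw [← Nat.descFactorial_succ]
    cases n with
    | zero => simp
    | succ m => exact (Nat.succ_descFactorial_succ m k).symm
  have hfact : ((n - k)! * n.descFactorial k : ℝ) = n ! := by
    exact_mod_cast Nat.factorial_mul_descFactorial hk
  rw [eq_div_iff (by positivity), ← hfact]
  rw_mod_cast [hsucc]
  ring

theorem deriv_at_two_general (n k : ℕ) (hk : k ≤ n - 1) :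
    (∑ σ : Equiv.Perm (Fin n),
      ((Equiv.Perm.sign σ : ℤ) : ℝ) *
        (Nat.descFactorial (Finset.univ.filter fun i => σ i = i).card k : ℝ) *
        (2:ℝ) ^ ((Finset.univ.filter fun i => σ i = i).card - k))
      = (n.factorial : ℝ) * ((n : ℝ) - k + 1) / ((n - k).factorial : ℝ) := by
  have hgen : ∑ σ : Perm (Fin n), C ((Perm.sign σ : ℤ) : ℝ) * X ^ #{i | σ i = i}
      = (X - 1) ^ n + (n : ℝ[X]) * (X - 1) ^ (n - 1) := by
    have h := Perm.sum_sign_mul_add_one_pow_card_fixed (α := Fin n) (X - 1 : ℝ[X])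
    simpa only [sub_add_cancel, Fintype.card_fin, ← C_eq_intCast] using h
  rw [← Nat.descFactorial_add_mul_descFactorial_sub_one (by omega),
    ← eval_iterate_derivative_sum_C_mul_X_pow, hgen, iterate_map_add,
    iterate_derivative_natCast_mul, eval_add, eval_mul, eval_two_iterate_derivative_X_sub_one_pow,
    eval_two_iterate_derivative_X_sub_one_pow]
  simp

theorem deriv_at_two (n k : ℕ) (hn : 1 ≤ n) (hk : k ≤ n - 1) :
    (∑ σ : Equiv.Perm (Fin n),
      ((Equiv.Perm.sign σ : ℤ) : ℝ) *
        (Nat.descFactorial (Finset.univ.filter fun i => σ i = i).card k : ℝ) *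
        (2:ℝ) ^ ((Finset.univ.filter fun i => σ i = i).card - k))
      = (n.factorial : ℝ) * ((n : ℝ) - k + 1) / ((n - k).factorial : ℝ) :=
  deriv_at_two_general n k hk
end

section
/- For any natural numbers n ≥ 1 and k ≥ 1, the sum over σ in S_n of sign(σ)·(fix(σ))!/(fix(σ)+k)! equals (-1)^(n+1)·(n² + (k-1)n - (k-1)) / ((k-1)!·(n+k-1)·(n+k)). -/
/-!
The signed fixed-point enumerator `∑_σ sign σ · x ^ fix σ` is the determinant of the matrix with
`x` on the diagonal and `1` elsewhere, i.e. of `(x - 1) I + J` with `J` the all-ones matrix;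
since `J` has rank one this is `(x - 1) ^ n + n (x - 1) ^ (n - 1)`. The weight `f! / (f + k)!` is
the Beta integral `(1 / (k - 1)!) ∫₀¹ t ^ f (1 - t) ^ (k - 1) dt`, so the whole sum is the
integral of `((t - 1) ^ n + n (t - 1) ^ (n - 1)) (1 - t) ^ (k - 1) / (k - 1)!`, a combination of
two integrals of powers of `1 - t`.
-/

open Finset Matrix intervalIntegral
open scoped Nat

theorem Equiv.Perm.sum_sign_mul_pow_card_fixed {ι R : Type*} [Fintype ι] [DecidableEq ι]
    [CommRing R] (x : R) :
    ∑ σ : Equiv.Perm ι, ((Equiv.Perm.sign σ : ℤ) : R) * x ^ #{i | σ i = i}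
      = (x - 1) ^ Fintype.card ι + Fintype.card ι * (x - 1) ^ (Fintype.card ι - 1) := by
  have hM : (of fun i j : ι => if i = j then x else 1) = scalar ι (x - 1) - vecMulVec (-1) 1 := by
    ext i j
    by_cases h : i = j <;> simp [h]
  have hdet : (of fun i j : ι => if i = j then x else 1).det
      = ∑ σ : Equiv.Perm ι, ((Equiv.Perm.sign σ : ℤ) : R) * x ^ #{i | σ i = i} := by
    rw [det_apply']
    refine sum_congr rfl fun σ _ => ?_
    simp [prod_ite]
  rw [← hdet, hM, ← eval_charpoly, charpoly_vecMulVec]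
  simp [dotProduct]

theorem integral_pow_mul_one_sub_pow (a b : ℕ) :
    ∫ x in (0 : ℝ)..1, x ^ a * (1 - x) ^ b = (a ! * b ! : ℝ) / (a + b + 1)! := by
  induction b generalizing a with
  | zero =>
    simp [Nat.factorial_succ, field]
  | succ b ih =>
    have hsplit (x : ℝ) :
        x ^ a * (1 - x) ^ (b + 1) = x ^ a * (1 - x) ^ b - x ^ (a + 1) * (1 - x) ^ b := by
      ring
    simp_rw [hsplit]
    rw [integral_sub (by apply Continuous.intervalIntegrable; fun_prop)
      (by apply Continuous.intervalIntegrable; fun_prop), ih, ih,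
      show a + 1 + b + 1 = a + b + 1 + 1 by ring, show a + (b + 1) + 1 = a + b + 1 + 1 by ring]
    push_cast [Nat.factorial_succ]
    field_simp
    ring

theorem factorial_div_factorial_add_succ_eq_integral (a l : ℕ) :
    (a ! : ℝ) / (a + (l + 1))! = (∫ x in (0 : ℝ)..1, x ^ a * (1 - x) ^ l) / l ! := by
  rw [integral_pow_mul_one_sub_pow, ← add_assoc]
  field_simp

theorem integral_one_sub_pow (j : ℕ) : ∫ x in (0 : ℝ)..1, (1 - x) ^ j = 1 / (j + 1) := by
  simp [integral_comp_sub_left fun x => x ^ j]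

theorem Equiv.Perm.sum_sign_mul_factorial_div_factorial_add_succ {ι : Type*} [Fintype ι]
    [DecidableEq ι] (l : ℕ) :
    ∑ σ : Equiv.Perm ι, ((Equiv.Perm.sign σ : ℤ) : ℝ) *
        ((#{i | σ i = i})! : ℝ) / (#{i | σ i = i} + (l + 1))!
      = (∫ x in (0 : ℝ)..1, ((x - 1) ^ Fintype.card ι
          + Fintype.card ι * (x - 1) ^ (Fintype.card ι - 1)) * (1 - x) ^ l) / l ! := by
  simp_rw [mul_div_assoc, factorial_div_factorial_add_succ_eq_integral,
    ← sum_sign_mul_pow_card_fixed, sum_mul]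
  rw [integral_finsetSum fun σ _ => by apply Continuous.intervalIntegrable; fun_prop, sum_div]
  simp_rw [mul_assoc, integral_const_mul, mul_div_assoc]

theorem integral_sub_one_pow_add_mul_sub_one_pow_mul_one_sub_pow (m l : ℕ) :
    ∫ x in (0 : ℝ)..1, ((x - 1) ^ (m + 1) + (m + 1 : ℕ) * (x - 1) ^ m) * (1 - x) ^ l
      = (-1) ^ m * ((m + 1) / (m + l + 1) - 1 / (m + l + 2)) := by
  have hpow (j : ℕ) (x : ℝ) : (x - 1) ^ j = (-1) ^ j * (1 - x) ^ j := by rw [← mul_pow]; ring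
  have hexpand (x : ℝ) : ((x - 1) ^ (m + 1) + (m + 1 : ℕ) * (x - 1) ^ m) * (1 - x) ^ l
      = (-1) ^ m * ((m + 1) * (1 - x) ^ (m + l) - (1 - x) ^ (m + l + 1)) := by
    simp only [hpow]
    push_cast
    ring
  simp_rw [hexpand]
  rw [integral_const_mul, integral_sub (by apply Continuous.intervalIntegrable; fun_prop)
    (by apply Continuous.intervalIntegrable; fun_prop), integral_const_mul,
    integral_one_sub_pow, integral_one_sub_pow]
  push_cast
  ring

theorem integral_identity (n k : ℕ) (hn : 1 ≤ n) (hk : 1 ≤ k) :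
    (∑ σ : Equiv.Perm (Fin n),
      ((Equiv.Perm.sign σ : ℤ) : ℚ) *
        ((Finset.univ.filter fun i => σ i = i).card.factorial : ℚ) /
        (((Finset.univ.filter fun i => σ i = i).card + k).factorial : ℚ))
      = (-1 : ℚ) ^ (n + 1) * ((n : ℚ)^2 + ((k : ℚ) - 1) * n - ((k : ℚ) - 1)) /
          (((k - 1).factorial : ℚ) * ((n : ℚ) + k - 1) * ((n : ℚ) + k)) := by
  obtain ⟨m, rfl⟩ : ∃ m, n = m + 1 := ⟨n - 1, by omega⟩
  obtain ⟨l, rfl⟩ : ∃ l, k = l + 1 := ⟨k - 1, by omega⟩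
  rw [← Rat.cast_inj (α := ℝ)]
  push_cast
  rw [Equiv.Perm.sum_sign_mul_factorial_div_factorial_add_succ, Fintype.card_fin,
    Nat.add_sub_cancel, integral_sub_one_pow_add_mul_sub_one_pow_mul_one_sub_pow,
    show (m : ℝ) + 1 + (l + 1) - 1 = m + l + 1 by ring,
    show (m : ℝ) + 1 + (l + 1) = m + l + 2 by ring]
  field_simp
  ring
end

section
/- For any natural number n ≥ 1, the sum over σ in S_n of sign(σ)/((fix(σ)+1)(fix(σ)+2)) equals (-1)^(n+1)·(n² + n - 1)/((n+1)(n+2)). -/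
/-!
Since `1 / ((k + 1) * (k + 2)) = ∫₀¹ (1 - t) t ^ k dt`, the sum equals `∫₀¹ (1 - t) P(t) dt`
with `P(x) = ∑ σ, sign σ * x ^ fix σ`. Expanding the determinant of the matrix with `x` on the
diagonal and `1` elsewhere gives `P(x)`; that matrix is `(x - 1) • 1` plus the rank-one all-ones
matrix, so the matrix determinant lemma gives `P(x) = (x - 1) ^ (n - 1) * (x + n - 1)`, and the
remaining integral is elementary.
-/

open Finset Matrix intervalIntegral

theorem integral_one_sub_mul_pow (k : ℕ) :
    ∫ t in (0 : ℝ)..1, (1 - t) * t ^ k = 1 / ((k + 1) * (k + 2)) := by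
  have h (t : ℝ) : (1 - t) * t ^ k = t ^ k - t ^ (k + 1) := by ring
  simp_rw [h]
  rw [integral_sub (intervalIntegrable_pow _) (intervalIntegrable_pow _), integral_pow,
    integral_pow]
  push_cast
  field_simp
  ring

theorem integral_sub_one_pow (m : ℕ) :
    ∫ t in (0 : ℝ)..1, (t - 1) ^ m = (-1) ^ m / (m + 1) := by
  rw [integral_comp_sub_right (fun t => t ^ m), integral_pow]
  field_simp
  ring

section
variable {α : Type*} [Fintype α] [DecidableEq α]

theorem det_of_ite_eq_sum_sign_mul_pow {R : Type*} [CommRing R] (x : R) :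
    (of fun i j : α => if i = j then x else 1).det =
      ∑ σ : Equiv.Perm α, (Equiv.Perm.sign σ : R) * x ^ #{i | σ i = i} := by
  rw [det_apply]
  refine sum_congr rfl fun σ _ => ?_
  rw [Units.smul_def, zsmul_eq_mul, ← prod_const, prod_filter]
  simp only [of_apply]

theorem det_of_ite_eq {K : Type*} [Field K] (hα : 1 ≤ Fintype.card α) (x : K) :
    (of fun i j : α => if i = j then x else 1).det =
      (x - 1) ^ (Fintype.card α - 1) * (x + Fintype.card α - 1) := by
  obtain ⟨m, hm⟩ : ∃ m, Fintype.card α = m + 1 := ⟨_, (Nat.sub_add_cancel hα).symm⟩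
  rw [hm, Nat.add_sub_cancel]
  rcases eq_or_ne x 1 with rfl | hx
  · rcases m.eq_zero_or_pos with rfl | hm0
    · have : Unique α := (Fintype.card_eq_one_iff_nonempty_unique.mp hm).some
      simp [det_unique]
    · obtain ⟨a, b, hab⟩ := Fintype.exists_pair_of_one_lt_card (by omega : 1 < Fintype.card α)
      rw [det_zero_of_row_eq hab (by ext; simp)]
      simp [zero_pow hm0.ne']
  · have hx' : x - 1 ≠ 0 := sub_ne_zero.mpr hx
    have hM : (of fun i j : α => if i = j then x else 1) = (x - 1) • (1 +
        replicateCol Unit (fun _ => (x - 1)⁻¹) * replicateRow Unit (fun _ => (1 : K))) := by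
      ext i j
      rcases eq_or_ne i j with rfl | hij
      · simp [mul_apply]
        field_simp
        ring
      · simp [mul_apply, hij]
        field_simp
    rw [hM, det_smul, det_one_add_replicateCol_mul_replicateRow]
    simp only [dotProduct, sum_const, card_univ, hm, nsmul_eq_mul]
    field_simp
    push_cast
    ring

theorem sum_sign_mul_pow_card_fixedPoints {K : Type*} [Field K] (hα : 1 ≤ Fintype.card α)
    (x : K) : ∑ σ : Equiv.Perm α, (Equiv.Perm.sign σ : K) * x ^ #{i | σ i = i} =
      (x - 1) ^ (Fintype.card α - 1) * (x + Fintype.card α - 1) := by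
  rw [← det_of_ite_eq_sum_sign_mul_pow, det_of_ite_eq hα]

theorem sum_sign_div_card_fixedPoints (hα : 1 ≤ Fintype.card α) :
    ∑ σ : Equiv.Perm α, (Equiv.Perm.sign σ : ℝ) / ((#{i | σ i = i} + 1) * (#{i | σ i = i} + 2))
      = (-1) ^ (Fintype.card α + 1) * ((Fintype.card α : ℝ) ^ 2 + Fintype.card α - 1) /
          ((Fintype.card α + 1) * (Fintype.card α + 2)) := by
  obtain ⟨m, hm⟩ : ∃ m, Fintype.card α = m + 1 := ⟨_, (Nat.sub_add_cancel hα).symm⟩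
  calc
    _ = ∑ σ : Equiv.Perm α,
          ∫ t in (0 : ℝ)..1, (1 - t) * ((Equiv.Perm.sign σ : ℝ) * t ^ #{i | σ i = i}) := by
      refine sum_congr rfl fun σ _ => ?_
      simp_rw [mul_left_comm (1 - _) (Equiv.Perm.sign σ : ℝ)]
      rw [integral_const_mul, integral_one_sub_mul_pow, mul_one_div]
    _ = ∫ t in (0 : ℝ)..1,
          (1 - t) * ∑ σ : Equiv.Perm α, (Equiv.Perm.sign σ : ℝ) * t ^ #{i | σ i = i} := by
      rw [← integral_finsetSum fun σ _ => (by fun_prop : Continuous _).intervalIntegrable _ _]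
      simp_rw [mul_sum]
    _ = ∫ t in (0 : ℝ)..1, -((t - 1) ^ (m + 2) + (m + 1) * (t - 1) ^ (m + 1)) := by
      congr with t
      rw [sum_sign_mul_pow_card_fixedPoints hα, hm]
      push_cast
      ring
    _ = _ := by
      rw [integral_neg, integral_add ((by fun_prop : Continuous _).intervalIntegrable _ _)
        ((by fun_prop : Continuous _).intervalIntegrable _ _), integral_const_mul,
        integral_sub_one_pow, integral_sub_one_pow, hm]
      push_cast
      field_simp
      ring

end

theorem sum_k2 (n : ℕ) (hn : 1 ≤ n) :
    (∑ σ : Equiv.Perm (Fin n),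
      ((Equiv.Perm.sign σ : ℤ) : ℚ) /
        ((((Finset.univ.filter fun i => σ i = i).card : ℚ) + 1) *
          (((Finset.univ.filter fun i => σ i = i).card : ℚ) + 2)))
      = (-1 : ℚ) ^ (n + 1) * ((n : ℚ)^2 + n - 1) / (((n : ℚ) + 1) * ((n : ℚ) + 2)) := by
  have h := sum_sign_div_card_fixedPoints (α := Fin n) (by rwa [Fintype.card_fin])
  rw [Fintype.card_fin] at h
  exact_mod_cast h
end

section
/- For any natural number n ≥ 1, the sum over σ in S_n of sign(σ)/((fix(σ)+1)(fix(σ)+2)(fix(σ)+3)) equals (-1)^(n+1)·((n+1)² - 3)/(2(n+2)(n+3)). -/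
open intervalIntegral

private lemma sumk3_det (n : ℕ) (hn : 1 ≤ n) (x : ℝ) (hx : x ≠ 1) :
    ∑ σ : Equiv.Perm (Fin n), ((Equiv.Perm.sign σ : ℤ) : ℝ) * x ^ (Finset.univ.filter fun i => σ i = i).card
      = (x - 1) ^ n + n * (x - 1) ^ (n - 1) := by
  have step1 : ∑ σ : Equiv.Perm (Fin n), ((Equiv.Perm.sign σ : ℤ) : ℝ) * x ^ (Finset.univ.filter fun i => σ i = i).card
      = (Matrix.of fun i j : Fin n => if i = j then x else (1:ℝ)).det := by
    rw [Matrix.det_apply]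
    refine Finset.sum_congr rfl fun σ _ => ?_
    rw [Units.smul_def, zsmul_eq_mul]
    congr 1
    have : ∀ i : Fin n, (Matrix.of fun i j : Fin n => if i = j then x else (1:ℝ)) (σ i) i = if σ i = i then x else 1 := fun i => rfl
    simp_rw [this]
    rw [Finset.prod_ite, Finset.prod_const, Finset.prod_const, one_pow, mul_one]
  rw [step1]
  have hx1 : x - 1 ≠ 0 := sub_ne_zero.mpr hx
  have hM : (Matrix.of fun i j : Fin n => if i = j then x else (1:ℝ))
      = (x - 1) • (1 + Matrix.replicateCol Unit (fun _ => (x-1)⁻¹) * Matrix.replicateRow Unit (fun _ => (1:ℝ))) := by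
    ext i j
    simp [Matrix.one_apply, Matrix.mul_apply, Matrix.replicateCol, Matrix.replicateRow, mul_add]
    by_cases h : i = j <;> simp [h, hx1]
  rw [hM, Matrix.det_smul, Matrix.det_one_add_replicateCol_mul_replicateRow]
  obtain ⟨m, rfl⟩ : ∃ m, n = m + 1 := ⟨n - 1, by omega⟩
  simp [dotProduct, Finset.card_univ, pow_succ]
  field_simp

private lemma sumk3_intA (k : ℕ) :
    ∫ x in (0:ℝ)..1, x ^ k * (1 - x)^2
      = 2 / (((k:ℝ)+1) * ((k:ℝ)+2) * ((k:ℝ)+3)) := by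
  have h : ∀ x : ℝ, x ^ k * (1 - x)^2 = x ^ k - 2 * x ^ (k+1) + x ^ (k+2) := by
    intro x; ring
  rw [intervalIntegral.integral_congr (fun x _ => h x)]
  rw [intervalIntegral.integral_add, intervalIntegral.integral_sub]
  · rw [intervalIntegral.integral_const_mul]
    simp [integral_pow]
    have h1 : (k:ℝ)+1 ≠ 0 := by positivity
    have h2 : (k:ℝ)+2 ≠ 0 := by positivity
    have h3 : (k:ℝ)+3 ≠ 0 := by positivity
    field_simp
    ring
  · exact (intervalIntegrable_pow k)
  · exact (intervalIntegrable_pow (k+1)).const_mul 2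
  · exact ((intervalIntegrable_pow k).sub ((intervalIntegrable_pow (k+1)).const_mul 2))
  · exact intervalIntegrable_pow (k+2)

private lemma sumk3_intB (m : ℕ) : ∫ x in (0:ℝ)..1, (x - 1) ^ m = (-1:ℝ)^m / (m+1) := by
  rw [intervalIntegral.integral_comp_sub_right (fun x => x ^ m) 1]
  rw [integral_pow]
  norm_num
  rw [pow_succ]
  ring

theorem sum_k3 (n : ℕ) (hn : 1 ≤ n) :
    (∑ σ : Equiv.Perm (Fin n),
      ((Equiv.Perm.sign σ : ℤ) : ℚ) /
        ((((Finset.univ.filter fun i => σ i = i).card : ℚ) + 1) *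
          (((Finset.univ.filter fun i => σ i = i).card : ℚ) + 2) *
          (((Finset.univ.filter fun i => σ i = i).card : ℚ) + 3)))
      = (-1 : ℚ) ^ (n + 1) * (((n : ℚ) + 1)^2 - 3) / (2 * ((n : ℚ) + 2) * ((n : ℚ) + 3)) := by
  have key : (∑ σ : Equiv.Perm (Fin n),
      ((Equiv.Perm.sign σ : ℤ) : ℝ) /
        ((((Finset.univ.filter fun i => σ i = i).card : ℝ) + 1) *
          (((Finset.univ.filter fun i => σ i = i).card : ℝ) + 2) *
          (((Finset.univ.filter fun i => σ i = i).card : ℝ) + 3)))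
      = (-1 : ℝ) ^ (n + 1) * (((n : ℝ) + 1)^2 - 3) / (2 * ((n : ℝ) + 2) * ((n : ℝ) + 3)) := by
    -- rewrite each summand as an integral
    have step1 : ∀ σ : Equiv.Perm (Fin n),
        ((Equiv.Perm.sign σ : ℤ) : ℝ) /
          ((((Finset.univ.filter fun i => σ i = i).card : ℝ) + 1) *
            (((Finset.univ.filter fun i => σ i = i).card : ℝ) + 2) *
            (((Finset.univ.filter fun i => σ i = i).card : ℝ) + 3))
        = (1/2) * ∫ x in (0:ℝ)..1, ((Equiv.Perm.sign σ : ℤ) : ℝ) * (x ^ (Finset.univ.filter fun i => σ i = i).card * (1 - x)^2) := by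
      intro σ
      set k := (Finset.univ.filter fun i => σ i = i).card
      rw [intervalIntegral.integral_const_mul, sumk3_intA k]
      have h1 : (k:ℝ)+1 ≠ 0 := by positivity
      have h2 : (k:ℝ)+2 ≠ 0 := by positivity
      have h3 : (k:ℝ)+3 ≠ 0 := by positivity
      field_simp
    simp_rw [step1]
    rw [← Finset.mul_sum]
    rw [← intervalIntegral.integral_finset_sum (fun σ _ => by
      apply IntervalIntegrable.const_mul
      exact ((intervalIntegrable_pow _).mul_continuousOn (by fun_prop)))]
    -- replace integrand a.e.
    have hcongr : (∫ x in (0:ℝ)..1, ∑ σ : Equiv.Perm (Fin n),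
          ((Equiv.Perm.sign σ : ℤ) : ℝ) * (x ^ (Finset.univ.filter fun i => σ i = i).card * (1 - x)^2))
        = ∫ x in (0:ℝ)..1, ((x-1) ^ (n+2) + n * (x-1) ^ (n+1)) := by
      apply intervalIntegral.integral_congr_ae
      have hae : ∀ᵐ (x : ℝ), x ≠ 1 := by
        rw [MeasureTheory.ae_iff]
        have : {x : ℝ | ¬ x ≠ 1} = {1} := by ext y; simp
        rw [this]
        exact MeasureTheory.measure_singleton 1
      filter_upwards [hae] with x hx _
      have : ∑ σ : Equiv.Perm (Fin n),
          ((Equiv.Perm.sign σ : ℤ) : ℝ) * (x ^ (Finset.univ.filter fun i => σ i = i).card * (1 - x)^2)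
          = (∑ σ : Equiv.Perm (Fin n),
          ((Equiv.Perm.sign σ : ℤ) : ℝ) * x ^ (Finset.univ.filter fun i => σ i = i).card) * (1-x)^2 := by
        rw [Finset.sum_mul]; exact Finset.sum_congr rfl fun σ _ => by ring
      rw [this, sumk3_det n hn x hx]
      obtain ⟨m, rfl⟩ : ∃ m, n = m + 1 := ⟨n - 1, by omega⟩
      simp only [Nat.add_sub_cancel]
      ring
    rw [hcongr]
    rw [intervalIntegral.integral_add
      (Continuous.intervalIntegrable (by fun_prop) _ _)
      (Continuous.intervalIntegrable (by fun_prop) _ _), intervalIntegral.integral_const_mul,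
      sumk3_intB, sumk3_intB]
    have h2 : ((n:ℝ)+2) ≠ 0 := by positivity
    have h3 : ((n:ℝ)+3) ≠ 0 := by positivity
    have e1 : (-1:ℝ)^(n+2) = (-1:ℝ)^n := by rw [pow_add]; norm_num
    have e2 : (-1:ℝ)^(n+1) = -(-1:ℝ)^n := by rw [pow_add]; norm_num
    push_cast
    rw [e1, e2]
    have hne : (-1:ℝ)^n ≠ 0 := by positivity
    field_simp
    ring
  -- transfer from ℝ to ℚ
  apply @Rat.cast_injective ℝ _
  push_cast
  convert key using 2
end

section
/- For natural numbers n ≥ 1 and k ≥ 2, the sum S_n(k) = Σ_{j=2}^{k} (-1)^(n+j) / ((k-j)!·(n+j)!) equals (-1)^n / ((n+1)!·(k-2)!·(n+k)). -/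
/-!
Multiplied by `(n + k)!`, the `j`-th summand becomes `(-1)^(n+j) * (n + k).choose (k - j)`, so
after the substitution `i = k - j` the sum is a partial alternating sum along a row of Pascal's
triangle. Such a sum telescopes by Pascal's rule:
`∑ i ∈ range (m + 1), (-1)^i * (N + 1).choose i = (-1)^m * N.choose m`.
With `N = n + k - 1` and `m = k - 2` the remaining binomial coefficient cancels against the
factorials.
-/

open Finset Nat

theorem neg_one_pow_add_mul_neg_one_pow {R : Type*} [Monoid R] [HasDistribNeg R] (a b : ℕ) :
    (-1 : R) ^ (a + b) * (-1) ^ a = (-1) ^ b := by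
  rw [← pow_add, show a + b + a = b + 2 * a by ring, pow_add, pow_mul]
  simp

theorem alternating_sum_range_choose_eq_choose {R : Type*} [CommRing R] (N m : ℕ) :
    ∑ i ∈ range (m + 1), (-1 : R) ^ i * ((N + 1).choose i : R) = (-1) ^ m * (N.choose m : R) := by
  exact_mod_cast congrArg (Int.cast : ℤ → R) Int.alternating_sum_range_choose_eq_choose

theorem neg_one_pow_div_factorial_mul_factorial {K : Type*} [Field K] [CharZero K] (a b : ℕ) :
    (-1 : K) ^ b / (a ! * b !) = (-1) ^ (a + b) * ((-1) ^ a * ((a + b).choose a : K)) / (a + b)! := by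
  rw [← mul_assoc, neg_one_pow_add_mul_neg_one_pow, cast_add_choose, mul_div_assoc,
    div_div_cancel_left', div_eq_mul_inv]
  exact_mod_cast (factorial_pos _).ne'

theorem S_n_k_general (n k : ℕ) (hk : 2 ≤ k) :
    (∑ j ∈ Finset.Icc 2 k, (-1 : ℚ) ^ (n + j) / (((k - j).factorial : ℚ) * ((n + j).factorial : ℚ)))
      = (-1 : ℚ) ^ n / (((n + 1).factorial : ℚ) * ((k - 2).factorial : ℚ) * ((n : ℚ) + k)) := by
  obtain ⟨m, rfl⟩ : ∃ m, k = m + 2 := ⟨k - 2, by omega⟩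
  set N := n + m + 1
  calc _ = ∑ i ∈ range (m + 1),
        (-1 : ℚ) ^ (N + 1) * ((-1) ^ i * ((N + 1).choose i : ℚ)) / (N + 1)! := by
        refine sum_nbij' (m + 2 - ·) (m + 2 - ·) ?_ ?_ ?_ ?_ fun j hj => ?_
        iterate 4 intro j hj; simp only [mem_Icc, mem_range] at hj ⊢; omega
        replace hj : j ≤ m + 2 := (mem_Icc.1 hj).2
        rw [neg_one_pow_div_factorial_mul_factorial, show m + 2 - j + (n + j) = N + 1 by omega]
    _ = (-1) ^ (N + 1) * ((-1) ^ m * (N.choose m : ℚ)) / (N + 1)! := by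
        rw [← sum_div, ← mul_sum, alternating_sum_range_choose_eq_choose]
    _ = _ := by
        have hsign : (-1 : ℚ) ^ (N + 1) * (-1) ^ m = (-1) ^ n := by
          rw [show N + 1 = m + (n + 2) by omega, neg_one_pow_add_mul_neg_one_pow, pow_add]
          simp
        have hN : ((N + 1 : ℕ) : ℚ) = n + (m + 2 : ℕ) := by push_cast [N]; ring
        rw [← mul_assoc, hsign, cast_choose ℚ (show m ≤ N by omega), show N - m = n + 1 by omega,
          factorial_succ N, Nat.add_sub_cancel, cast_mul, hN]
        field_simp

theorem S_n_k (n k : ℕ) (hn : 1 ≤ n) (hk : 2 ≤ k) :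
    (∑ j ∈ Finset.Icc 2 k, (-1 : ℚ) ^ (n + j) / (((k - j).factorial : ℚ) * ((n + j).factorial : ℚ)))
      = (-1 : ℚ) ^ n / (((n + 1).factorial : ℚ) * ((k - 2).factorial : ℚ) * ((n : ℚ) + k)) :=
  S_n_k_general n k hk
end
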